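/- arXiv:2405.13531 — 3 statements merged into one kernel-verified Lean document; each statement's English description precedes it below -/
import Mathlib

section
/- For integer q ≥ 2 and a ∈ [−1, 1], the expectation under uniformity of ψ(θ₁₂; a) = cot(θ₁₂/2) + a·tan(θ₁₂/2), where cos θ₁₂ = X₁'X₂ for X₁, X₂ independent uniform on S^q, equals (1+a)(q−1)Γ((q−1)/2)²/(2Γ(q/2)²). -/
/-!
Write `θ = arccos x`, so that `cos θ = x` and `sin θ = √(1 - x²)`. The half-angle identities
`cot (θ/2) sin θ = 1 + cos θ` and `tan (θ/2) sin θ = 1 - cos θ` turn the integrand into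
`((1 + a) + (1 - a) x) (1 - x²)^c` with `c = (q - 3)/2 > -1`. The odd part integrates to zero;
the even part becomes, after `x = 2t - 1`, the Beta integral `2^(2c+1) B(c+1, c+1)`, which
Legendre's duplication formula rewrites as `√π Γ(c+1) / Γ(c+3/2)`.
-/

open intervalIntegral

/-- Surface area of the unit sphere `S^q`: `ω_q = 2π^((q+1)/2)/Γ((q+1)/2)`. -/
noncomputable def sphereArea (q : ℝ) : ℝ :=
  2 * Real.pi ^ ((q + 1) / 2) / Real.Gamma ((q + 1) / 2)

open Real MeasureTheory Set

lemma cot_half_mul_sin {θ : ℝ} (h : sin (θ / 2) ≠ 0) : cot (θ / 2) * sin θ = 1 + cos θ := by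
  have hθ : θ = 2 * (θ / 2) := by ring
  rw [hθ, sin_two_mul, cos_two_mul, ← hθ, cot_eq_cos_div_sin]
  field_simp
  ring

lemma tan_half_mul_sin {θ : ℝ} (h : cos (θ / 2) ≠ 0) : tan (θ / 2) * sin θ = 1 - cos θ := by
  have hθ : θ = 2 * (θ / 2) := by ring
  rw [hθ, sin_two_mul, cos_two_mul, ← hθ, tan_eq_sin_div_cos]
  field_simp
  linear_combination 2 * sin_sq_add_cos_sq (θ / 2)

lemma psi_arccos_mul_sqrt (a : ℝ) {x : ℝ} (hx : x ∈ Ioo (-1) 1) :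
    (cot (arccos x / 2) + a * tan (arccos x / 2)) * √(1 - x ^ 2) = (1 + a) + (1 - a) * x := by
  have hpos : 0 < arccos x / 2 := by linarith [arccos_pos.mpr hx.2]
  have hlt : arccos x / 2 < π / 2 := by linarith [arccos_lt_pi.mpr hx.1]
  have hsin : sin (arccos x / 2) ≠ 0 := (sin_pos_of_pos_of_lt_pi hpos (by linarith)).ne'
  have hcos : cos (arccos x / 2) ≠ 0 := (cos_pos_of_mem_Ioo ⟨by linarith, hlt⟩).ne'
  rw [← sin_arccos, add_mul, mul_assoc, cot_half_mul_sin hsin, tan_half_mul_sin hcos,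
    cos_arccos hx.1.le hx.2.le]
  ring

lemma psi_arccos_mul_one_sub_sq_rpow (a c : ℝ) {x : ℝ} (hx : x ∈ Ioo (-1) 1) :
    (cot (arccos x / 2) + a * tan (arccos x / 2)) * (1 - x ^ 2) ^ (c + 1 / 2) =
      ((1 + a) + (1 - a) * x) * (1 - x ^ 2) ^ c := by
  have h : 0 < 1 - x ^ 2 := by nlinarith [hx.1, hx.2]
  rw [rpow_add h, ← sqrt_eq_rpow, ← psi_arccos_mul_sqrt a hx]
  ring

lemma sphereArea_sub_one_div (s : ℝ) :
    sphereArea (s - 1) / sphereArea s = Gamma ((s + 1) / 2) / (√π * Gamma (s / 2)) := by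
  have hπ : π ^ ((s + 1) / 2) = π ^ (s / 2) * √π := by
    rw [sqrt_eq_rpow, ← rpow_add pi_pos]; ring_nf
  have hπs : π ^ (s / 2) ≠ 0 := (rpow_pos_of_pos pi_pos _).ne'
  have hsqrtπ : √π ≠ 0 := (sqrt_pos.mpr pi_pos).ne'
  rw [sphereArea, sphereArea, sub_add_cancel, hπ]
  field_simp

lemma integral_neg_eq_zero_of_odd {f : ℝ → ℝ} (hf : ∀ x, f (-x) = -f x) (b : ℝ) :
    ∫ x in -b..b, f x = 0 := by
  have h := integral_comp_neg (a := -b) (b := b) f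
  simp only [hf, intervalIntegral.integral_neg, neg_neg] at h
  linarith

lemma integral_affine_mul_of_even {g : ℝ → ℝ} {b : ℝ} (hg : IntervalIntegrable g volume (-b) b)
    (heven : ∀ x, g (-x) = g x) (α β : ℝ) :
    ∫ x in -b..b, (α + β * x) * g x = α * ∫ x in -b..b, g x := by
  have hodd : ∫ x in -b..b, x * g x = 0 :=
    integral_neg_eq_zero_of_odd (fun x => by rw [heven]; ring) b
  have hxg : IntervalIntegrable (fun x => x * g x) volume (-b) b :=
    hg.continuousOn_mul continuousOn_id
  simp_rw [add_mul, mul_assoc]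
  rw [integral_add (hg.const_mul α) (hxg.const_mul β), intervalIntegral.integral_const_mul,
    intervalIntegral.integral_const_mul, hodd, mul_zero, add_zero]

lemma intervalIntegrable_one_sub_sq_rpow {c : ℝ} (hc : -1 < c) :
    IntervalIntegrable (fun x : ℝ => (1 - x ^ 2) ^ c) volume (-1) 1 := by
  have hright : IntervalIntegrable (fun x : ℝ => (1 - x ^ 2) ^ c) volume 0 1 := by
    have h := (intervalIntegrable_rpow' (a := 1) (b := 0) hc).comp_sub_left 1
    simp only [sub_self, sub_zero] at h
    refine (h.continuousOn_mul (g := fun x => (1 + x) ^ c) ?_).congr ?_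
    · exact ContinuousOn.rpow_const (by fun_prop) fun x hx => Or.inl (by
        rw [uIcc_of_le zero_le_one] at hx; linarith [hx.1])
    · intro x hx
      rw [uIoc_of_le zero_le_one] at hx
      simp only
      rw [← mul_rpow (by linarith [hx.1]) (by linarith [hx.2])]
      ring_nf
  have hleft : IntervalIntegrable (fun x : ℝ => (1 - x ^ 2) ^ c) volume (-1) 0 := by
    simpa using ((IntervalIntegrable.iff_comp_neg).mp hright).symm
  exact hleft.trans hright

lemma integral_rpow_mul_one_sub_rpow {u v : ℝ} (hu : 0 < u) (hv : 0 < v) :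
    ∫ x in (0 : ℝ)..1, x ^ (u - 1) * (1 - x) ^ (v - 1) = Gamma u * Gamma v / Gamma (u + v) := by
  apply Complex.ofReal_injective
  have h := Complex.betaIntegral_eq_Gamma_mul_div u v (by simpa) (by simpa)
  push_cast [← Complex.Gamma_ofReal, ← h, ← intervalIntegral.integral_ofReal]
  refine integral_congr fun x hx => ?_
  rw [uIcc_of_le zero_le_one] at hx
  push_cast [Complex.ofReal_cpow hx.1, Complex.ofReal_cpow (sub_nonneg.mpr hx.2)]
  rfl

lemma integral_one_sub_sq_rpow_eq_beta (c : ℝ) :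
    ∫ x in (-1 : ℝ)..1, (1 - x ^ 2) ^ c =
      2 * 4 ^ c * ∫ t in (0 : ℝ)..1, t ^ c * (1 - t) ^ c := by
  have hsub := integral_comp_mul_sub (a := 0) (b := 1) (fun x : ℝ => (1 - x ^ 2) ^ c)
    two_ne_zero 1
  norm_num at hsub
  rw [show ∫ x in (-1 : ℝ)..1, (1 - x ^ 2) ^ c = 2 * ∫ t in (0 : ℝ)..1, (1 - (2 * t - 1) ^ 2) ^ c
    by linarith, mul_assoc, ← intervalIntegral.integral_const_mul (4 ^ c)]
  congr 1
  refine integral_congr fun t ht => ?_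
  rw [uIcc_of_le zero_le_one] at ht
  rw [← mul_rpow ht.1 (by linarith [ht.2]), ← mul_rpow (by norm_num) (by nlinarith [ht.1, ht.2])]
  ring_nf

lemma integral_one_sub_sq_rpow {c : ℝ} (hc : -1 < c) :
    ∫ x in (-1 : ℝ)..1, (1 - x ^ 2) ^ c = √π * Gamma (c + 1) / Gamma (c + 3 / 2) := by
  have hc1 : 0 < c + 1 := by linarith
  have hdup := Gamma_mul_Gamma_add_half (c + 1)
  rw [show c + 1 + 1 / 2 = c + 3 / 2 by ring] at hdup
  have h4 : (4 : ℝ) ^ c * 2 ^ (1 - 2 * (c + 1)) = 1 / 2 := by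
    rw [show (4 : ℝ) = 2 ^ (2 : ℝ) by norm_num, ← rpow_mul zero_le_two, ← rpow_add two_pos,
      show 2 * c + (1 - 2 * (c + 1)) = -1 by ring, rpow_neg_one, one_div]
  have hbeta := integral_rpow_mul_one_sub_rpow hc1 hc1
  simp only [add_sub_cancel_right] at hbeta
  rw [integral_one_sub_sq_rpow_eq_beta, hbeta,
    show c + 1 + (c + 1) = 2 * (c + 1) by ring, mul_div_assoc', div_eq_div_iff
      (Gamma_pos_of_pos (by linarith)).ne' (Gamma_pos_of_pos (by linarith)).ne']
  linear_combination (2 * 4 ^ c * Gamma (c + 1)) * hdup +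
    (2 * Gamma (c + 1) * Gamma (2 * (c + 1)) * √π) * h4

theorem expectation_psi_uniform_general (q : ℕ) (hq : 2 ≤ q) (a : ℝ) :
    sphereArea ((q : ℝ) - 1) / sphereArea (q : ℝ) *
      ∫ x in (-1 : ℝ)..1,
        (Real.cot (Real.arccos x / 2) + a * Real.tan (Real.arccos x / 2)) *
          (1 - x ^ 2) ^ ((q : ℝ) / 2 - 1) =
    (1 + a) * ((q : ℝ) - 1) * Real.Gamma (((q : ℝ) - 1) / 2) ^ 2 /
      (2 * Real.Gamma ((q : ℝ) / 2) ^ 2) := by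
  have hq' : (2 : ℝ) ≤ q := by exact_mod_cast hq
  set c : ℝ := ((q : ℝ) - 3) / 2 with hc_def
  have hc : -1 < c := by rw [hc_def]; linarith
  have hpsi : ∫ x in (-1 : ℝ)..1, (cot (arccos x / 2) + a * tan (arccos x / 2)) *
      (1 - x ^ 2) ^ ((q : ℝ) / 2 - 1) =
      ∫ x in (-1 : ℝ)..1, ((1 + a) + (1 - a) * x) * (1 - x ^ 2) ^ c := by
    refine integral_congr_Ioo_of_le (by norm_num) fun x hx => ?_
    rw [show (q : ℝ) / 2 - 1 = c + 1 / 2 by ring, psi_arccos_mul_one_sub_sq_rpow a c hx]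
  rw [hpsi, integral_affine_mul_of_even (intervalIntegrable_one_sub_sq_rpow hc) (by simp),
    integral_one_sub_sq_rpow hc, sphereArea_sub_one_div,
    show (q + 1 : ℝ) / 2 = ((q - 1) / 2) + 1 by ring, Gamma_add_one (by linarith),
    show c + 1 = ((q : ℝ) - 1) / 2 by ring, show c + 3 / 2 = (q : ℝ) / 2 by ring]
  have hsqrtπ : √π ≠ 0 := (sqrt_pos.mpr pi_pos).ne'
  have hΓ : Gamma ((q : ℝ) / 2) ≠ 0 := (Gamma_pos_of_pos (by positivity)).ne'
  field_simp

/-- Expectation under uniformity of `ψ(θ₁₂;a) = cot(θ₁₂/2) + a tan(θ₁₂/2)`, written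
via rotational symmetry as a one-dimensional integral, equals
`(1+a)(q−1)Γ((q−1)/2)²/(2Γ(q/2)²)` for integer `q ≥ 2` and `a ∈ [−1,1]`. -/
theorem expectation_psi_uniform (q : ℕ) (hq : 2 ≤ q) (a : ℝ) (ha : a ∈ Set.Icc (-1 : ℝ) 1) :
    sphereArea ((q : ℝ) - 1) / sphereArea (q : ℝ) *
      ∫ x in (-1 : ℝ)..1,
        (Real.cot (Real.arccos x / 2) + a * Real.tan (Real.arccos x / 2)) *
          (1 - x ^ 2) ^ ((q : ℝ) / 2 - 1) =
    (1 + a) * ((q : ℝ) - 1) * Real.Gamma (((q : ℝ) - 1) / 2) ^ 2 /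
      (2 * Real.Gamma ((q : ℝ) / 2) ^ 2) :=
  expectation_psi_uniform_general q hq a
end

section
/- Watson-type hypergeometric identity (odd case, c = (q−1)/2): for nonnegative integer k and real q > 1, ₃F₂(−2k−1, 2k+q, (q−1)/2; q/2, q; 1) = [(2k+1)/(2k+q)] · Γ(k+1/2)² Γ(q/2)² / (π Γ(k+q/2)²). -/
open Finset

/-- Pochhammer symbol `(x)_m = x(x+1)⋯(x+m−1)`. -/
noncomputable def poch (x : ℝ) (m : ℕ) : ℝ := ∏ i ∈ Finset.range m, (x + i)

/-- Terminating generalized hypergeometric sum `₃F₂(a,b,c;d,e;1)` truncated at `N`. -/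
noncomputable def F32 (a b c d e : ℝ) (N : ℕ) : ℝ :=
  ∑ m ∈ Finset.range (N + 1),
    poch a m * poch b m * poch c m / (poch d m * poch e m * (Nat.factorial m))

/-! Expanding `(c)ₘ/(e)ₘ` by Chu–Vandermonde, exchanging the sums and summing the inner series by
Chu–Vandermonde again shows that `₃F₂(-n, n + 2d - 1, c; d, e; 1)` only changes by the sign
`(-1)ⁿ` under `c ↦ e - c`. For `e = 2c + 1` this swaps `c` and `c + 1`, so the contiguous
relation in `c` evaluates the moment `∑ m tₘ` of `Φₙ = ₃F₂(-n, n + 2d - 1, c; d, 2c + 1; 1)` as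
`c((-1)ⁿ - 1)Φₙ`. The contiguous relations in the first two parameters involve the same moment
and the common series `₃F₂(-n, n + 2d, c; d, 2c + 1; 1)`; eliminating it leaves a two-term
recurrence between `Φₙ` and `Φₙ₊₁`. It gives Watson's product
`Φ₂ₖ = (1/2)ₖ (d - c)ₖ / ((c + 1/2)ₖ (d)ₖ)` and `Φ₂ₖ₊₁ = (2k + 1)/(2k + 1 + 2c) Φ₂ₖ`; at
`d = q/2`, `c = (q - 1)/2` the Pochhammer symbols are quotients of Gamma values. -/

open Polynomial

lemma poch_eq_ascPochhammer_eval (x : ℝ) (m : ℕ) : poch x m = (ascPochhammer ℝ m).eval x := by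
  induction m with
  | zero => simp [poch]
  | succ m ih => rw [poch, prod_range_succ, ← poch, ih, ascPochhammer_succ_eval]

lemma poch_succ (x : ℝ) (m : ℕ) : poch x (m + 1) = poch x m * (x + m) :=
  prod_range_succ _ m

lemma mul_poch_add_one (x : ℝ) (m : ℕ) : x * poch (x + 1) m = poch x m * (x + m) := by
  rw [← poch_succ, poch, poch, prod_range_succ', mul_comm]
  push_cast
  simp only [add_zero, add_assoc, add_comm (1 : ℝ)]

lemma poch_add (x : ℝ) (j l : ℕ) : poch x (j + l) = poch x j * poch (x + j) l := by
  simp [poch, prod_range_add, add_assoc]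

lemma poch_pos {x : ℝ} (hx : 0 < x) (m : ℕ) : 0 < poch x m :=
  prod_pos fun i _ => by positivity

lemma poch_neg (r : ℝ) (k : ℕ) : poch (-r) k = (-1) ^ k * poch (r - k + 1) k := by
  simp only [poch_eq_ascPochhammer_eval, ascPochhammer_eval_neg_eq_descPochhammer,
    descPochhammer_eval_eq_ascPochhammer]

lemma poch_neg_natCast (m j : ℕ) : poch (-m) j = (-1) ^ j * m.descFactorial j := by
  rw [poch_eq_ascPochhammer_eval, ascPochhammer_eval_neg_eq_descPochhammer,
    descPochhammer_eval_eq_descFactorial]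

lemma poch_neg_natCast_of_lt {m j : ℕ} (h : m < j) : poch (-m) j = 0 := by
  simp [poch_neg_natCast, Nat.descFactorial_eq_zero_iff_lt.mpr h]

lemma descPochhammer_smeval_eq_poch (r : ℝ) (k : ℕ) :
    (descPochhammer ℤ k).smeval r = poch (r - k + 1) k := by
  rw [descPochhammer_smeval_eq_ascPochhammer,
    ascPochhammer_smeval_eq_eval, poch_eq_ascPochhammer_eval]

theorem chu_vandermonde (m : ℕ) (a : ℝ) {c : ℝ} (hc : 0 < c) :
    ∑ j ∈ range (m + 1), poch (-m) j * poch a j / (poch c j * j.factorial) =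
      poch (c - a) m / poch c m := by
  -- Vandermonde's identity for falling factorials at `-a` and `c + m - 1`
  have vdm := Ring.descPochhammer_smeval_add (r := -a) (s := c + m - 1) m (Commute.all _ _)
  rw [Nat.sum_antidiagonal_eq_sum_range_succ_mk] at vdm
  simp only [descPochhammer_smeval_eq_poch] at vdm
  rw [eq_div_iff (poch_pos hc m).ne', sum_mul]
  convert vdm.symm using 1
  · refine sum_congr rfl fun j hj => ?_
    have hjm : j ≤ m := Nat.lt_succ_iff.mp (mem_range.mp hj)
    have hsplit : poch c m = poch c j * poch (c + j) (m - j) := by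
      rw [← poch_add, Nat.add_sub_cancel' hjm]
    have hsign : poch (-a - j + 1) j = (-1) ^ j * poch a j := by
      rw [show -a - j + 1 = -(a + j - 1) by ring, poch_neg]; ring_nf
    have hshift : c + m - 1 - ((m - j : ℕ) : ℝ) + 1 = c + j := by
      push_cast [Nat.cast_sub hjm]; ring
    rw [hsplit, hsign, hshift, poch_neg_natCast, Nat.descFactorial_eq_factorial_mul_choose]
    have := (poch_pos hc j).ne'
    field_simp
    push_cast
    ring
  · congr 1; ring

lemma poch_neg_natCast_add_mul_factorial (j l : ℕ) :
    poch (-((j + l : ℕ) : ℝ)) j * l.factorial = (-1) ^ j * (j + l).factorial := by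
  rw [poch_neg_natCast, ← Nat.factorial_mul_descFactorial (Nat.le_add_right j l),
    Nat.add_sub_cancel_left]
  push_cast
  ring

lemma sum_mul_poch_neg_natCast {n j : ℕ} (hj : j ≤ n) {d : ℝ} (hd : 0 < d) :
    ∑ m ∈ range (n + 1), poch (-n) m * poch (n + 2 * d - 1) m / (poch d m * m.factorial) *
        poch (-m) j =
      (-1) ^ n * (poch (-n) j * poch (n + 2 * d - 1) j / poch d j) := by
  set A : ℝ := n + 2 * d - 1
  have hdj : 0 < d + j := by positivity
  have hterm : ∀ l ∈ range (n - j + 1),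
      poch (-n) (j + l) * poch A (j + l) / (poch d (j + l) * (j + l).factorial) *
          poch (-((j + l : ℕ) : ℝ)) j =
        (-1) ^ j * (poch (-n) j * poch A j / poch d j) *
          (poch (-(n - j : ℕ)) l * poch (A + j) l / (poch (d + j) l * l.factorial)) := by
    intro l _
    have hsplit : poch (-n) (j + l) = poch (-n) j * poch (-(n - j : ℕ)) l := by
      rw [poch_add]; push_cast [Nat.cast_sub hj]; ring_nf
    rw [hsplit, poch_add A, poch_add d]
    have := (poch_pos hd j).ne'
    have := (poch_pos hdj l).ne'
    have := (j + l).factorial_ne_zero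
    have := l.factorial_ne_zero
    field_simp
    linear_combination (poch (-n) j * poch (-(n - j : ℕ)) l * poch A j * poch (A + j) l) *
      poch_neg_natCast_add_mul_factorial j l
  have hfactor : (-1 : ℝ) ^ j * (-1) ^ (n - j) = (-1) ^ n := by
    rw [← pow_add, Nat.add_sub_cancel' hj]
  have hrefl : poch (d + j - (A + j)) (n - j) = (-1) ^ (n - j) * poch (d + j) (n - j) := by
    rw [show d + j - (A + j) = -(n + d - 1) by ring, poch_neg]
    push_cast [Nat.cast_sub hj]; ring_nf
  rw [show n + 1 = j + (n - j + 1) by omega, sum_range_add,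
    sum_eq_zero fun m hm => by rw [poch_neg_natCast_of_lt (mem_range.mp hm), mul_zero],
    zero_add, sum_congr rfl hterm, ← mul_sum, chu_vandermonde (n - j) (A + j) hdj, hrefl,
    mul_div_cancel_right₀ _ (poch_pos hdj _).ne', ← hfactor]
  ring

theorem F32_reflect (n : ℕ) (c : ℝ) {d e : ℝ} (hd : 0 < d) (he : 0 < e) :
    F32 (-n) (n + 2 * d - 1) c d e n = (-1) ^ n * F32 (-n) (n + 2 * d - 1) (e - c) d e n := by
  set A : ℝ := n + 2 * d - 1
  set T : ℕ → ℝ := fun m => poch (-n) m * poch A m / (poch d m * m.factorial)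
  set U : ℕ → ℝ := fun j => poch (e - c) j / (poch e j * j.factorial)
  have hexpand : ∀ m ∈ range (n + 1),
      poch c m / poch e m = ∑ j ∈ range (n + 1), poch (-m) j * U j := by
    intro m hm
    have hcv := chu_vandermonde m (e - c) he
    rw [sub_sub_cancel] at hcv
    rw [← hcv, ← sum_subset (range_subset_range.mpr (mem_range.mp hm))]
    · exact sum_congr rfl fun j _ => mul_div_assoc _ _ _
    · intro j _ hj
      rw [poch_neg_natCast_of_lt (by simpa using hj), zero_mul]
  calc F32 (-n) A c d e n = ∑ m ∈ range (n + 1), T m * (poch c m / poch e m) :=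
        sum_congr rfl fun m _ => by ring
    _ = ∑ j ∈ range (n + 1), U j * ∑ m ∈ range (n + 1), T m * poch (-m) j := by
        simp_rw [mul_sum]
        rw [sum_congr rfl fun m hm => by rw [hexpand m hm, mul_sum], sum_comm]
        exact sum_congr rfl fun j _ => sum_congr rfl fun m _ => by ring
    _ = ∑ j ∈ range (n + 1), U j * ((-1) ^ n * (poch (-n) j * poch A j / poch d j)) :=
        sum_congr rfl fun j hj => by
          rw [sum_mul_poch_neg_natCast (Nat.lt_succ_iff.mp (mem_range.mp hj)) hd]
    _ = (-1) ^ n * F32 (-n) A (e - c) d e n := by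
        rw [F32, mul_sum]
        exact sum_congr rfl fun j _ => by ring

noncomputable def F32Moment (a b c d e : ℝ) (N : ℕ) : ℝ :=
  ∑ m ∈ range (N + 1), m * (poch a m * poch b m * poch c m / (poch d m * poch e m * m.factorial))

section Contiguous

variable (a b c d e : ℝ) (N : ℕ)

lemma F32_contiguous_a :
    a * (F32 (a + 1) b c d e N - F32 a b c d e N) = F32Moment a b c d e N := by
  rw [F32, F32, F32Moment, ← sum_sub_distrib, mul_sum]
  refine sum_congr rfl fun m _ => ?_
  linear_combination (poch b m * poch c m / (poch d m * poch e m * m.factorial)) *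
    mul_poch_add_one a m

lemma F32_contiguous_b :
    b * (F32 a (b + 1) c d e N - F32 a b c d e N) = F32Moment a b c d e N := by
  rw [F32, F32, F32Moment, ← sum_sub_distrib, mul_sum]
  refine sum_congr rfl fun m _ => ?_
  linear_combination (poch a m * poch c m / (poch d m * poch e m * m.factorial)) *
    mul_poch_add_one b m

lemma F32_contiguous_c :
    c * (F32 a b (c + 1) d e N - F32 a b c d e N) = F32Moment a b c d e N := by
  rw [F32, F32, F32Moment, ← sum_sub_distrib, mul_sum]
  refine sum_congr rfl fun m _ => ?_
  linear_combination (poch a m * poch b m / (poch d m * poch e m * m.factorial)) *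
    mul_poch_add_one c m

end Contiguous

lemma F32_neg_natCast_succ (n : ℕ) (b c d e : ℝ) :
    F32 (-n) b c d e (n + 1) = F32 (-n) b c d e n := by
  rw [F32, sum_range_succ, poch_neg_natCast_of_lt n.lt_succ_self]
  simp [F32]

section Watson

variable (c d : ℝ)

noncomputable def watsonSum (n : ℕ) : ℝ := F32 (-n) (n + 2 * d - 1) c d (2 * c + 1) n

variable {c d}

lemma F32Moment_eq_mul_watsonSum (n : ℕ) (hd : 0 < d) (hc : 0 < 2 * c + 1) :
    F32Moment (-n) (n + 2 * d - 1) c d (2 * c + 1) n = c * ((-1) ^ n - 1) * watsonSum c d n := by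
  have h := F32_reflect n (c + 1) hd hc
  rw [show 2 * c + 1 - (c + 1) = c by ring] at h
  rw [← F32_contiguous_c, h, watsonSum]
  ring

theorem watsonSum_succ (n : ℕ) (hd : 0 < d) (hc : 0 < 2 * c + 1) :
    (n + 1) * (n + 2 * d - 1 + c * ((-1) ^ n - 1)) * watsonSum c d n =
      (n + 2 * d - 1) * (n + 1 + c * (1 + (-1) ^ n)) * watsonSum c d (n + 1) := by
  have hb := F32_contiguous_b (-n) (n + 2 * d - 1) c d (2 * c + 1) n
  have ha := F32_contiguous_a (-(n + 1 : ℕ)) ((n + 1 : ℕ) + 2 * d - 1) c d (2 * c + 1) (n + 1)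
  have hshift : F32 (-((n + 1 : ℕ) : ℝ) + 1) ((n + 1 : ℕ) + 2 * d - 1) c d (2 * c + 1) (n + 1) =
      F32 (-n) (n + 2 * d - 1 + 1) c d (2 * c + 1) n := by
    rw [← F32_neg_natCast_succ]; push_cast; ring_nf
  rw [hshift, F32Moment_eq_mul_watsonSum (n + 1) hd hc] at ha
  rw [F32Moment_eq_mul_watsonSum n hd hc] at hb
  simp only [watsonSum] at *
  push_cast at *
  linear_combination (-(n + 1 : ℝ)) * hb - (n + 2 * d - 1) * ha

lemma watsonSum_zero : watsonSum c d 0 = 1 := by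
  simp [watsonSum, F32, poch]

lemma watsonSum_two_mul_add_one (k : ℕ) (hd : 1 / 2 < d) (hc : 0 < 2 * c + 1) :
    watsonSum c d (2 * k + 1) = (2 * k + 1) / (2 * k + 1 + 2 * c) * watsonSum c d (2 * k) := by
  have h := watsonSum_succ (2 * k) (show 0 < d by linarith) hc
  rw [pow_mul, neg_one_sq, one_pow] at h
  have hk : (0 : ℝ) ≤ k := k.cast_nonneg
  have h1 : (0 : ℝ) < 2 * k + 2 * d - 1 := by linarith
  have h2 : (0 : ℝ) < 2 * k + 1 + 2 * c := by linarith
  rw [div_mul_eq_mul_div, eq_div_iff h2.ne']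
  refine mul_left_cancel₀ h1.ne' ?_
  push_cast at h
  linear_combination -h

lemma watsonSum_two_mul_add_two (k : ℕ) (hd : 0 < d) (hc : 0 < 2 * c + 1) :
    watsonSum c d (2 * k + 2) =
      (2 * k + 2 * d - 2 * c) / (2 * k + 2 * d) * watsonSum c d (2 * k + 1) := by
  have h := watsonSum_succ (2 * k + 1) hd hc
  rw [pow_succ, pow_mul, neg_one_sq, one_pow] at h
  have h1 : (0 : ℝ) < 2 * k + 2 * d := by positivity
  rw [div_mul_eq_mul_div, eq_div_iff h1.ne']
  refine mul_left_cancel₀ (show (2 * k + 2 : ℝ) ≠ 0 by positivity) ?_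
  push_cast at h
  linear_combination -h

theorem watsonSum_two_mul (k : ℕ) (hd : 1 / 2 < d) (hc : 0 < 2 * c + 1) :
    watsonSum c d (2 * k) = poch (1 / 2) k * poch (d - c) k / (poch (c + 1 / 2) k * poch d k) := by
  induction k with
  | zero => simp [watsonSum_zero, poch]
  | succ k ih =>
    rw [show 2 * (k + 1) = 2 * k + 2 by ring, watsonSum_two_mul_add_two k (by linarith) hc,
      watsonSum_two_mul_add_one k hd hc, ih, poch_succ, poch_succ, poch_succ, poch_succ]
    have := (poch_pos (show 0 < c + 1 / 2 by linarith) k).ne'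
    have := (poch_pos (show 0 < d by linarith) k).ne'
    have hk : (0 : ℝ) ≤ k := k.cast_nonneg
    have : (0 : ℝ) < 2 * k + 1 + 2 * c := by linarith
    have : (0 : ℝ) < 2 * k + 2 * d := by linarith
    field_simp
    ring

end Watson

lemma Gamma_add_natCast_eq_poch_mul {x : ℝ} (hx : 0 < x) (k : ℕ) :
    Real.Gamma (x + k) = poch x k * Real.Gamma x := by
  induction k with
  | zero => simp [poch]
  | succ k ih =>
    rw [Nat.cast_succ, ← add_assoc, Real.Gamma_add_one (by positivity : 0 < x + k).ne', ih,
      poch_succ]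
    ring

/-- Watson-type summation (odd case, c = (q−1)/2). -/
theorem watson_odd_minus (k : ℕ) (q : ℝ) (hq : 1 < q) :
    F32 (-(2 * k + 1 : ℝ)) (2 * k + q) ((q - 1) / 2) (q / 2) q (2 * k + 1) =
      ((2 * k + 1) / (2 * k + q)) *
        (Real.Gamma ((k : ℝ) + 1 / 2) ^ 2 * Real.Gamma (q / 2) ^ 2 /
          (Real.pi * Real.Gamma ((k : ℝ) + q / 2) ^ 2)) := by
  have hsum : F32 (-(2 * k + 1 : ℝ)) (2 * k + q) ((q - 1) / 2) (q / 2) q (2 * k + 1) =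
      watsonSum ((q - 1) / 2) (q / 2) (2 * k + 1) := by
    rw [watsonSum]; congr 1 <;> push_cast <;> ring
  have hd : 1 / 2 < q / 2 := by linarith
  have hc : 0 < 2 * ((q - 1) / 2) + 1 := by linarith
  rw [hsum, watsonSum_two_mul_add_one k hd hc, watsonSum_two_mul k hd hc,
    add_comm (k : ℝ), add_comm (k : ℝ), Gamma_add_natCast_eq_poch_mul one_half_pos,
    Gamma_add_natCast_eq_poch_mul (by positivity), Real.Gamma_one_half_eq,
    show q / 2 - (q - 1) / 2 = 1 / 2 by ring, show (q - 1) / 2 + 1 / 2 = q / 2 by ring,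
    show 2 * (k : ℝ) + 1 + 2 * ((q - 1) / 2) = 2 * k + q by ring,
    mul_pow, mul_pow, Real.sq_sqrt Real.pi_pos.le]
  have := (poch_pos (show (0 : ℝ) < q / 2 by linarith) k).ne'
  have := (Real.Gamma_pos_of_pos (show (0 : ℝ) < q / 2 by linarith)).ne'
  have : (0 : ℝ) < 2 * k + q := by positivity
  field_simp
end

section
/- Gegenbauer coefficients of tan(θ/2): for integers k ≥ 0 and q ≥ 2, b_{2k,q}(ψ_tan) = α_{k,q}(4k+q−1) and b_{2k+1,q}(ψ_tan) = −α_{k,q}(2k+1)(4k+q+1)/(2k+q), where b_{k,q}(ψ_tan) := c_{k,q}^{−1} ∫_{−1}^{1} tan(arccos(x)/2) C_k^{(q−1)/2}(x)(1−x²)^{q/2−1}dx, α_{k,q} = Γ(k+1/2)²Γ((q−1)/2)²/(2πΓ(k+q/2)²), and c_{k,q} = (ω_q/ω_{q−1})(1+2k/(q−1))^{−1}C_k^{(q−1)/2}(1). -/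
/-- Gegenbauer (ultraspherical) polynomials `C_n^{lam}` via the standard recurrence. -/
noncomputable def gegenbauer (lam : ℝ) : ℕ → ℝ → ℝ
  | 0 => fun _ => 1
  | 1 => fun x => 2 * lam * x
  | (n + 2) => fun x =>
      (2 * ((n : ℝ) + 1 + lam) * x * gegenbauer lam (n + 1) x
        - ((n : ℝ) + 2 * lam) * gegenbauer lam n x) / ((n : ℝ) + 2)

/-!
With `λ = (q - 1) / 2`, on `(-1, 1)` the integrand's weight `tan (arccos x / 2) (1 - x²)^(λ - 1/2)`
equals `(1 - x)^λ (1 + x)^(λ - 1)`, so the coefficients are explicit multiples of the moments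
`I n = ∫ (1 - x)^λ (1 + x)^(λ - 1) C_n^λ(x) dx`. The function `(1 - x)^(λ+1) (1 + x)^λ C_n^λ(x)`
vanishes at `±1`; differentiating it with the help of
`(1 - x²) C_n^λ' = (n + 2λ) x C_n^λ - (n + 1) C_{n+1}^λ` and the three-term recurrence yields
`(n + 2)(n + 2 + 2λ) I (n + 2) = n (n + 2λ) I n - 2 (n + 1 + λ) I (n + 1)`. Starting from the Beta
integral `I 0` this recurrence is solved in closed form, and `C_{2k}^λ(1)` is obtained in the same
way from `(n + 1) C_{n+1}^λ(1) = (n + 2λ) C_n^λ(1)`.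
-/

open Real Set MeasureTheory

theorem Gamma_natCast_succ_add (k : ℕ) {s : ℝ} (hs : 0 < s) :
    Gamma (((k + 1 : ℕ) : ℝ) + s) = (k + s) * Gamma (k + s) := by
  rw [Nat.cast_succ, add_right_comm, Gamma_add_one (by positivity)]

section Gegenbauer

variable (lam : ℝ)

theorem gegenbauer_add_two (n : ℕ) (x : ℝ) :
    ((n : ℝ) + 2) * gegenbauer lam (n + 2) x =
      2 * ((n : ℝ) + 1 + lam) * x * gegenbauer lam (n + 1) x
        - ((n : ℝ) + 2 * lam) * gegenbauer lam n x := by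
  rw [gegenbauer]
  field_simp

theorem differentiable_gegenbauer (n : ℕ) : Differentiable ℝ (gegenbauer lam n) := by
  induction n using Nat.twoStepInduction with
  | zero => exact differentiable_const _
  | one => exact (differentiable_id.const_mul _)
  | more n ih₀ ih₁ =>
    unfold gegenbauer
    fun_prop

theorem continuous_gegenbauer (n : ℕ) : Continuous (gegenbauer lam n) :=
  (differentiable_gegenbauer lam n).continuous

theorem deriv_gegenbauer_add_two (n : ℕ) (x : ℝ) :
    ((n : ℝ) + 2) * deriv (gegenbauer lam (n + 2)) x =
      2 * ((n : ℝ) + 1 + lam) * (gegenbauer lam (n + 1) x + x * deriv (gegenbauer lam (n + 1)) x)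
        - ((n : ℝ) + 2 * lam) * deriv (gegenbauer lam n) x := by
  have h := ((((hasDerivAt_id' x).const_mul (2 * ((n : ℝ) + 1 + lam))).mul
    (differentiable_gegenbauer lam (n + 1) x).hasDerivAt).sub
    ((differentiable_gegenbauer lam n x).hasDerivAt.const_mul ((n : ℝ) + 2 * lam))).div_const
    ((n : ℝ) + 2)
  have hderiv : deriv (gegenbauer lam (n + 2)) x = _ := h.deriv
  rw [hderiv]
  field_simp

theorem one_sub_sq_mul_deriv_gegenbauer (n : ℕ) (x : ℝ) :
    (1 - x ^ 2) * deriv (gegenbauer lam n) x =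
      ((n : ℝ) + 2 * lam) * x * gegenbauer lam n x - ((n : ℝ) + 1) * gegenbauer lam (n + 1) x := by
  induction n using Nat.twoStepInduction with
  | zero => simp [gegenbauer]
  | one =>
    have hderiv : deriv (gegenbauer lam 1) x = 2 * lam * 1 :=
      ((hasDerivAt_id' x).const_mul (2 * lam)).deriv
    rw [hderiv]
    simp only [gegenbauer]
    ring
  | more n ih₀ ih₁ =>
    have E := deriv_gegenbauer_add_two lam n x
    have R₀ := gegenbauer_add_two lam n x
    have R₁ := gegenbauer_add_two lam (n + 1) x
    push_cast at *
    have hn : (n : ℝ) + 2 ≠ 0 := by positivity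
    apply mul_left_cancel₀ hn
    linear_combination (1 - x ^ 2) * E + 2 * ((n : ℝ) + 1 + lam) * x * ih₁
      - ((n : ℝ) + 2 * lam) * ih₀ + ((n : ℝ) + 2) * R₁ - ((n : ℝ) + 2 * lam) * x * R₀

theorem gegenbauer_succ_one (n : ℕ) :
    ((n : ℝ) + 1) * gegenbauer lam (n + 1) 1 = ((n : ℝ) + 2 * lam) * gegenbauer lam n 1 := by
  induction n with
  | zero => simp [gegenbauer]
  | succ n ih =>
    have R := gegenbauer_add_two lam n 1
    push_cast at *
    linear_combination R + ih

end Gegenbauer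

theorem gegenbauer_two_mul_one {lam : ℝ} (hlam : 0 < lam) (k : ℕ) :
    gegenbauer lam (2 * k) 1 =
      √π * Gamma (k + lam) * Gamma (k + (lam + 1 / 2)) /
        (Gamma lam * Gamma (lam + 1 / 2) * Gamma (k + 1 / 2) * Gamma (k + 1)) := by
  have hΓ₁ : 0 < Gamma lam := Gamma_pos_of_pos hlam
  have hΓ₂ : 0 < Gamma (lam + 1 / 2) := Gamma_pos_of_pos (by positivity)
  induction k with
  | zero =>
    simp only [Nat.cast_zero, zero_add, Gamma_one_half_eq, Gamma_one, mul_one, gegenbauer]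
    field_simp
  | succ k ih =>
    have h₀ := gegenbauer_succ_one lam (2 * k)
    have h₁ := gegenbauer_succ_one lam (2 * k + 1)
    push_cast at h₀ h₁
    have h : (2 * k + 2) * (2 * k + 1) * gegenbauer lam (2 * k + 2) 1 =
        (2 * k + 1 + 2 * lam) * (2 * k + 2 * lam) * gegenbauer lam (2 * k) 1 := by
      linear_combination (2 * (k : ℝ) + 1) * h₁ + (2 * k + 1 + 2 * lam) * h₀
    rw [show 2 * (k + 1) = 2 * k + 2 from rfl, Gamma_natCast_succ_add k hlam,
      Gamma_natCast_succ_add k (by positivity), Gamma_natCast_succ_add k (by norm_num),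
      Gamma_natCast_succ_add k one_pos]
    have : 0 < Gamma (k + 1 / 2) * Gamma (k + 1) :=
      mul_pos (Gamma_pos_of_pos (by positivity)) (Gamma_pos_of_pos (by positivity))
    apply mul_left_cancel₀ (by positivity : (2 * k + 2) * (2 * k + 1) ≠ (0 : ℝ))
    rw [h, ih]
    field_simp
    ring

theorem intervalIntegrable_one_sub_rpow_mul_one_add_rpow_mul {a b : ℝ} (ha : 0 ≤ a) (hb : -1 < b)
    {g : ℝ → ℝ} (hg : Continuous g) :
    IntervalIntegrable (fun x => (1 - x) ^ a * (1 + x) ^ b * g x) volume (-1) 1 := by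
  have hb' : IntervalIntegrable (fun x : ℝ => (1 + x) ^ b) volume (-1) 1 := by
    have h := (intervalIntegral.intervalIntegrable_rpow' hb (a := 0) (b := 2)).comp_add_left 1
    norm_num at h
    exact h
  have hc : Continuous fun x : ℝ => (1 - x) ^ a * g x :=
    ((continuous_rpow_const ha).comp (continuous_const.sub continuous_id)).mul hg
  refine (hb'.continuousOn_mul hc.continuousOn).congr ?_
  intro x _
  simp only
  ring

theorem integral_rpow_mul_sub_rpow {a b c : ℝ} (ha : 0 < a) (hb : 0 < b) (hc : 0 < c) :
    ∫ x in (0 : ℝ)..c, x ^ (a - 1) * (c - x) ^ (b - 1) =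
      c ^ (a + b - 1) * Gamma a * Gamma b / Gamma (a + b) := by
  have h := Complex.betaIntegral_scaled a b hc
  rw [Complex.betaIntegral_eq_Gamma_mul_div _ _ (by simpa) (by simpa)] at h
  apply Complex.ofReal_injective
  rw [← intervalIntegral.integral_ofReal, Complex.ofReal_div, Complex.ofReal_mul,
    Complex.ofReal_mul, Complex.ofReal_cpow hc.le,
    ← Complex.Gamma_ofReal, ← Complex.Gamma_ofReal, ← Complex.Gamma_ofReal, mul_assoc,
    mul_div_assoc]
  push_cast
  rw [← h]
  refine intervalIntegral.integral_congr fun x hx => ?_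
  rw [uIcc_of_le hc.le] at hx
  rw [Complex.ofReal_cpow hx.1, Complex.ofReal_cpow (sub_nonneg.2 hx.2)]
  push_cast
  ring_nf

theorem integral_one_sub_rpow_mul_one_add_rpow {a b : ℝ} (ha : -1 < a) (hb : -1 < b) :
    ∫ x in (-1 : ℝ)..1, (1 - x) ^ a * (1 + x) ^ b =
      2 ^ (a + b + 1) * Gamma (a + 1) * Gamma (b + 1) / Gamma (a + b + 2) := by
  have h := integral_rpow_mul_sub_rpow (c := 2) (neg_lt_iff_pos_add.1 hb) (neg_lt_iff_pos_add.1 ha)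
    two_pos
  have hsub := intervalIntegral.integral_comp_add_left
    (fun y : ℝ => y ^ (b + 1 - 1) * (2 - y) ^ (a + 1 - 1)) (a := -1) (b := 1) 1
  norm_num at hsub
  rw [show b + 1 + (a + 1) - 1 = a + b + 1 by ring, show b + 1 + (a + 1) = a + b + 2 by ring] at h
  simp only [add_sub_cancel_right] at h
  rw [← hsub] at h
  rw [mul_assoc, mul_comm (Gamma _), ← mul_assoc, ← h]
  refine intervalIntegral.integral_congr fun x _ => ?_
  ring_nf

theorem tan_half_arccos {x : ℝ} (hx₁ : -1 ≤ x) (hx₂ : x ≤ 1) :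
    tan (arccos x / 2) = √(1 - x) / √(1 + x) := by
  have h₀ := arccos_nonneg x
  have h₁ := arccos_le_pi x
  rw [tan_eq_sin_div_cos, sin_half_eq_sqrt h₀ (by linarith [pi_pos]),
    cos_half (by linarith [pi_pos]) h₁, cos_arccos hx₁ hx₂, sqrt_div' _ zero_le_two,
    sqrt_div' _ zero_le_two, div_div_div_cancel_right₀]
  positivity

noncomputable def tanWeight (lam x : ℝ) : ℝ := (1 - x) ^ lam * (1 + x) ^ (lam - 1)

theorem tan_half_arccos_mul_rpow {x : ℝ} (hx : x ∈ Ioo (-1 : ℝ) 1) (lam : ℝ) :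
    tan (arccos x / 2) * (1 - x ^ 2) ^ (lam - 1 / 2) = tanWeight lam x := by
  have h₁ : 0 < 1 - x := by linarith [hx.2]
  have h₂ : 0 < 1 + x := by linarith [hx.1]
  have e₁ : (1 - x) ^ lam = (1 - x) ^ (1 / 2 : ℝ) * (1 - x) ^ (lam - 1 / 2) := by
    rw [← rpow_add h₁]; ring_nf
  have e₂ : (1 + x) ^ (lam - 1 / 2) = (1 + x) ^ (lam - 1) * (1 + x) ^ (1 / 2 : ℝ) := by
    rw [← rpow_add h₂]; ring_nf
  have : (0 : ℝ) < (1 + x) ^ (1 / 2 : ℝ) := by positivity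
  rw [tan_half_arccos hx.1.le hx.2.le, sqrt_eq_rpow, sqrt_eq_rpow,
    show 1 - x ^ 2 = (1 - x) * (1 + x) by ring, mul_rpow h₁.le h₂.le, tanWeight, e₁, e₂]
  field_simp

noncomputable def tanMoment (lam : ℝ) (n : ℕ) : ℝ :=
  ∫ x in (-1 : ℝ)..1, tanWeight lam x * gegenbauer lam n x

theorem integral_tan_mul_gegenbauer (lam : ℝ) (n : ℕ) :
    ∫ x in (-1 : ℝ)..1, tan (arccos x / 2) * gegenbauer lam n x * (1 - x ^ 2) ^ (lam - 1 / 2) =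
      tanMoment lam n := by
  refine intervalIntegral.integral_congr_Ioo_of_le (by norm_num) fun x hx => ?_
  rw [← tan_half_arccos_mul_rpow hx]
  ring

theorem hasDerivAt_rpow_mul_rpow_mul_gegenbauer (lam : ℝ) (m : ℕ) {x : ℝ}
    (hx : x ∈ Ioo (-1 : ℝ) 1) :
    HasDerivAt (fun y => (1 - y) ^ (lam + 1) * (1 + y) ^ lam * gegenbauer lam m y)
      (tanWeight lam x * ((((m : ℝ) - 1) * x - 1) * gegenbauer lam m x
        - ((m : ℝ) + 1) * gegenbauer lam (m + 1) x)) x := by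
  have h₁ : 0 < 1 - x := by linarith [hx.2]
  have h₂ : 0 < 1 + x := by linarith [hx.1]
  have d₁ := ((hasDerivAt_id' x).const_sub 1).rpow_const (p := lam + 1) (Or.inl h₁.ne')
  have d₂ := ((hasDerivAt_id' x).const_add 1).rpow_const (p := lam) (Or.inl h₂.ne')
  have d₃ := (differentiable_gegenbauer lam m x).hasDerivAt
  refine ((d₁.mul d₂).mul d₃).congr_deriv ?_
  have e₁ : (1 - x) ^ (lam + 1) = (1 - x) ^ lam * (1 - x) := rpow_add_one h₁.ne' lam
  have e₂ : (1 + x) ^ lam = (1 + x) ^ (lam - 1) * (1 + x) := by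
    rw [← rpow_add_one h₂.ne', sub_add_cancel]
  rw [Pi.mul_apply, add_sub_cancel_right, tanWeight, e₁, e₂]
  linear_combination (1 - x) ^ lam * (1 + x) ^ (lam - 1) *
    one_sub_sq_mul_deriv_gegenbauer lam m x

section Moments

variable {lam : ℝ}

theorem intervalIntegrable_tanWeight_mul (hlam : 0 < lam) {g : ℝ → ℝ} (hg : Continuous g) :
    IntervalIntegrable (fun x => tanWeight lam x * g x) volume (-1) 1 :=
  intervalIntegrable_one_sub_rpow_mul_one_add_rpow_mul hlam.le (by linarith) hg

theorem integral_tanWeight_mul_gegenbauer_add_add (hlam : 0 < lam) (a b c : ℝ) (i j l : ℕ) :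
    ∫ x in (-1 : ℝ)..1, tanWeight lam x *
        (a * gegenbauer lam i x + b * gegenbauer lam j x + c * gegenbauer lam l x) =
      a * tanMoment lam i + b * tanMoment lam j + c * tanMoment lam l := by
  have hint : ∀ (d : ℝ) (m : ℕ),
      IntervalIntegrable (fun x => d * (tanWeight lam x * gegenbauer lam m x)) volume (-1) 1 :=
    fun d m => (intervalIntegrable_tanWeight_mul hlam (continuous_gegenbauer lam m)).const_mul d
  simp only [tanMoment, ← intervalIntegral.integral_const_mul]
  rw [← intervalIntegral.integral_add (hint a i) (hint b j),
    ← intervalIntegral.integral_add ((hint a i).add (hint b j)) (hint c l)]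
  exact intervalIntegral.integral_congr fun x _ => by ring

-- The antiderivative `(1 - x)^(λ+1) (1 + x)^λ C_m^λ(x)` vanishes at both endpoints.
theorem integral_tanWeight_mul_eq_zero (hlam : 0 < lam) (m : ℕ) :
    ∫ x in (-1 : ℝ)..1, tanWeight lam x * ((((m : ℝ) - 1) * x - 1) * gegenbauer lam m x
        - ((m : ℝ) + 1) * gegenbauer lam (m + 1) x) = 0 := by
  have hcont : Continuous fun y => (1 - y) ^ (lam + 1) * (1 + y) ^ lam * gegenbauer lam m y := by
    have := continuous_gegenbauer lam m
    fun_prop (disch := positivity)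
  rw [intervalIntegral.integral_eq_sub_of_hasDerivAt_of_le (by norm_num) hcont.continuousOn
    (fun x hx => hasDerivAt_rpow_mul_rpow_mul_gegenbauer lam m hx)
    (intervalIntegrable_tanWeight_mul hlam (by have := continuous_gegenbauer lam; fun_prop))]
  norm_num [zero_rpow, hlam.ne', (by linarith : lam + 1 ≠ 0)]

theorem tanMoment_one (hlam : 0 < lam) :
    (1 + 2 * lam) * tanMoment lam 1 = -(2 * lam) * tanMoment lam 0 := by
  have key : (1 + 2 * lam) * tanMoment lam 1 + 2 * lam * tanMoment lam 0 + 0 * tanMoment lam 0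
      = 0 :=
    calc _ = _ := (integral_tanWeight_mul_gegenbauer_add_add hlam _ _ _ 1 0 0).symm
      _ = ∫ x in (-1 : ℝ)..1, -(2 * lam) * (tanWeight lam x * (((((0 : ℕ) : ℝ) - 1) * x - 1) *
            gegenbauer lam 0 x - ((0 : ℕ) + 1) * gegenbauer lam (0 + 1) x)) :=
        intervalIntegral.integral_congr fun x _ => by simp only [gegenbauer]; push_cast; ring
      _ = 0 := by
        rw [intervalIntegral.integral_const_mul, integral_tanWeight_mul_eq_zero hlam, mul_zero]
  linarith

theorem tanMoment_add_two (hlam : 0 < lam) (n : ℕ) :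
    ((n : ℝ) + 2) * ((n : ℝ) + 2 + 2 * lam) * tanMoment lam (n + 2) =
      (n : ℝ) * ((n : ℝ) + 2 * lam) * tanMoment lam n
        - 2 * ((n : ℝ) + 1 + lam) * tanMoment lam (n + 1) := by
  have key : (n : ℝ) * ((n : ℝ) + 2 * lam) * tanMoment lam n
      + -(2 * ((n : ℝ) + 1 + lam)) * tanMoment lam (n + 1)
      + -(((n : ℝ) + 2) * ((n : ℝ) + 2 + 2 * lam)) * tanMoment lam (n + 2) = 0 :=
    calc _ = _ := (integral_tanWeight_mul_gegenbauer_add_add hlam _ _ _ _ _ _).symm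
      _ = ∫ x in (-1 : ℝ)..1, 2 * ((n : ℝ) + 1 + lam) * (tanWeight lam x *
            (((((n + 1 : ℕ) : ℝ) - 1) * x - 1) * gegenbauer lam (n + 1) x
              - ((n + 1 : ℕ) + 1) * gegenbauer lam (n + 1 + 1) x)) :=
        intervalIntegral.integral_congr fun x _ => by
          push_cast
          linear_combination ((n : ℝ) * tanWeight lam x) * gegenbauer_add_two lam n x
      _ = 0 := by
        rw [intervalIntegral.integral_const_mul, integral_tanWeight_mul_eq_zero hlam, mul_zero]
  linarith

theorem tanMoment_zero (hlam : 0 < lam) :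
    tanMoment lam 0 = √π * Gamma lam / Gamma (lam + 1 / 2) := by
  have hI : tanMoment lam 0 = ∫ x in (-1 : ℝ)..1, (1 - x) ^ lam * (1 + x) ^ (lam - 1) :=
    intervalIntegral.integral_congr fun x _ => by simp [tanWeight, gegenbauer]
  have hdup := Gamma_mul_Gamma_add_half lam
  have hpow : (2 : ℝ) ^ (lam + (lam - 1) + 1) * 2 ^ (1 - 2 * lam) = 2 := by
    rw [← rpow_add two_pos]; ring_nf; exact rpow_one 2
  have hΓ : 0 < Gamma (lam + 1 / 2) := Gamma_pos_of_pos (by positivity)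
  have hΓ₂ : 0 < Gamma (2 * lam) := Gamma_pos_of_pos (by positivity)
  rw [hI, integral_one_sub_rpow_mul_one_add_rpow (by linarith) (by linarith), sub_add_cancel,
    show lam + (lam - 1) + 2 = 2 * lam + 1 by ring, Gamma_add_one hlam.ne',
    Gamma_add_one (by positivity), div_eq_div_iff (by positivity) hΓ.ne']
  linear_combination (2 ^ (lam + (lam - 1) + 1) * lam * Gamma lam) * hdup
    + (lam * Gamma lam * Gamma (2 * lam) * √π) * hpow

theorem tanMoment_two_mul_and_two_mul_add_one (hlam : 0 < lam) (k : ℕ) :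
    tanMoment lam (2 * k) =
        Gamma (k + 1 / 2) * Gamma (k + lam) / (Gamma (k + 1) * Gamma (k + (lam + 1 / 2))) ∧
      tanMoment lam (2 * k + 1) =
        -((2 * k + 2 * lam) / (2 * k + 2 * lam + 1)) * tanMoment lam (2 * k) := by
  induction k with
  | zero =>
    have h₁ := tanMoment_one hlam
    refine ⟨?_, ?_⟩
    · simp only [Nat.cast_zero, mul_zero, zero_add, Gamma_one, one_mul, Gamma_one_half_eq,
        tanMoment_zero hlam]
    · simp only [Nat.cast_zero, mul_zero, zero_add]
      field_simp
      linarith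
  | succ k ih =>
    obtain ⟨ih₀, ih₁⟩ := ih
    have r₀ := tanMoment_add_two hlam (2 * k)
    have r₁ := tanMoment_add_two hlam (2 * k + 1)
    rw [show 2 * k + 1 + 1 = 2 * k + 2 from rfl] at r₁
    push_cast at r₀ r₁
    have hJ : 0 < Gamma (k + 1) * Gamma (k + (lam + 1 / 2)) :=
      mul_pos (Gamma_pos_of_pos (by positivity)) (Gamma_pos_of_pos (by positivity))
    have heven : tanMoment lam (2 * k + 2) =
        Gamma ((k + 1 : ℕ) + 1 / 2) * Gamma ((k + 1 : ℕ) + lam) /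
          (Gamma ((k + 1 : ℕ) + 1) * Gamma ((k + 1 : ℕ) + (lam + 1 / 2))) := by
      rw [Gamma_natCast_succ_add k (by norm_num), Gamma_natCast_succ_add k hlam,
        Gamma_natCast_succ_add k one_pos, Gamma_natCast_succ_add k (by positivity)]
      apply mul_left_cancel₀ (by positivity : (2 * k + 2) * (2 * k + 2 + 2 * lam) ≠ (0 : ℝ))
      rw [r₀, ih₁, ih₀]
      field_simp
      ring
    refine ⟨heven, ?_⟩
    rw [show 2 * (k + 1) + 1 = 2 * k + 1 + 2 from rfl, show 2 * (k + 1) = 2 * k + 2 from rfl]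
    apply mul_left_cancel₀ (by positivity : (2 * k + 1 + 2) * (2 * k + 1 + 2 + 2 * lam) ≠ (0 : ℝ))
    rw [r₁, ih₁, ih₀, heven]
    rw [Gamma_natCast_succ_add k (by norm_num), Gamma_natCast_succ_add k hlam,
      Gamma_natCast_succ_add k one_pos, Gamma_natCast_succ_add k (by positivity)]
    push_cast
    field_simp
    ring

end Moments

theorem sphereArea_div_sphereArea_sub_one (q : ℝ) :
    sphereArea q / sphereArea (q - 1) = √π * Gamma (q / 2) / Gamma ((q + 1) / 2) := by
  have : π ^ (q / 2) ≠ 0 := (rpow_pos_of_pos pi_pos _).ne'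
  rw [sphereArea, sphereArea, show (q - 1 + 1) / 2 = q / 2 by ring,
    show (q + 1) / 2 = q / 2 + 1 / 2 by ring, rpow_add pi_pos, ← sqrt_eq_rpow]
  field_simp

-- The coefficient `b_{n,q}(f)` and the constant `α_{k,q}` of the statement.
noncomputable def gegenbauerCoeff (q : ℝ) (f : ℝ → ℝ) (n : ℕ) : ℝ :=
  (sphereArea q / sphereArea (q - 1) * (1 + 2 * (n : ℝ) / (q - 1))⁻¹ *
      gegenbauer ((q - 1) / 2) n 1)⁻¹ *
    ∫ x in (-1 : ℝ)..1, f x * gegenbauer ((q - 1) / 2) n x * (1 - x ^ 2) ^ (q / 2 - 1)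

noncomputable def gegenbauerTanAlpha (q : ℝ) (k : ℕ) : ℝ :=
  Gamma ((k : ℝ) + 1 / 2) ^ 2 * Gamma ((q - 1) / 2) ^ 2 / (2 * π * Gamma ((k : ℝ) + q / 2) ^ 2)

theorem gegenbauerCoeff_tan {q : ℝ} (hq : 1 < q) (k : ℕ) :
    gegenbauerCoeff q (fun x => tan (arccos x / 2)) (2 * k) =
        gegenbauerTanAlpha q k * (4 * k + q - 1) ∧
      gegenbauerCoeff q (fun x => tan (arccos x / 2)) (2 * k + 1) =
        -(gegenbauerTanAlpha q k * ((2 * k + 1) * (4 * k + q + 1) / (2 * k + q))) := by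
  obtain ⟨lam, hlam, rfl⟩ : ∃ lam, 0 < lam ∧ q = 2 * lam + 1 := ⟨(q - 1) / 2, by linarith, by ring⟩
  have hC : gegenbauer lam (2 * k + 1) 1 =
      (2 * k + 2 * lam) / (2 * k + 1) * gegenbauer lam (2 * k) 1 := by
    have h := gegenbauer_succ_one lam (2 * k)
    push_cast at h
    field_simp
    linarith
  obtain ⟨heven, hodd⟩ := tanMoment_two_mul_and_two_mul_add_one hlam k
  simp only [gegenbauerCoeff, gegenbauerTanAlpha, sphereArea_div_sphereArea_sub_one]
  rw [show (2 * lam + 1 - 1) / 2 = lam by ring, show (2 * lam + 1) / 2 - 1 = lam - 1 / 2 by ring,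
    show (2 * lam + 1) / 2 = lam + 1 / 2 by ring, show (2 * lam + 1 + 1) / 2 = lam + 1 by ring,
    integral_tan_mul_gegenbauer, integral_tan_mul_gegenbauer, hodd, heven, hC,
    gegenbauer_two_mul_one hlam k, Gamma_add_one hlam.ne', add_sub_cancel_right]
  have := Gamma_pos_of_pos hlam
  have := Gamma_pos_of_pos (by positivity : 0 < lam + 1 / 2)
  have := Gamma_pos_of_pos (by positivity : 0 < (k : ℝ) + 1 / 2)
  have := Gamma_pos_of_pos (by positivity : 0 < (k : ℝ) + lam)
  have := Gamma_pos_of_pos (by positivity : 0 < (k : ℝ) + 1)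
  have := Gamma_pos_of_pos (by positivity : 0 < (k : ℝ) + (lam + 1 / 2))
  have hπ := sq_sqrt pi_pos.le
  constructor <;>
  · push_cast
    field_simp
    rw [hπ]
    ring

/-- Gegenbauer coefficients of tan(θ/2): even and odd orders. -/
theorem gegenbauer_coeff_tan (q : ℕ) (hq : 2 ≤ q) (k : ℕ) :
    ((sphereArea (q : ℝ) / sphereArea ((q : ℝ) - 1) *
        (1 + 2 * ((2 * k : ℕ) : ℝ) / ((q : ℝ) - 1))⁻¹ *
        gegenbauer (((q : ℝ) - 1) / 2) (2 * k) 1)⁻¹ *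
      ∫ x in (-1 : ℝ)..1,
        Real.tan (Real.arccos x / 2) * gegenbauer (((q : ℝ) - 1) / 2) (2 * k) x *
          (1 - x ^ 2) ^ ((q : ℝ) / 2 - 1) =
      Real.Gamma ((k : ℝ) + 1 / 2) ^ 2 * Real.Gamma (((q : ℝ) - 1) / 2) ^ 2 /
        (2 * Real.pi * Real.Gamma ((k : ℝ) + (q : ℝ) / 2) ^ 2) *
        (4 * (k : ℝ) + (q : ℝ) - 1)) ∧
    ((sphereArea (q : ℝ) / sphereArea ((q : ℝ) - 1) *
        (1 + 2 * ((2 * k + 1 : ℕ) : ℝ) / ((q : ℝ) - 1))⁻¹ *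
        gegenbauer (((q : ℝ) - 1) / 2) (2 * k + 1) 1)⁻¹ *
      ∫ x in (-1 : ℝ)..1,
        Real.tan (Real.arccos x / 2) * gegenbauer (((q : ℝ) - 1) / 2) (2 * k + 1) x *
          (1 - x ^ 2) ^ ((q : ℝ) / 2 - 1) =
      -(Real.Gamma ((k : ℝ) + 1 / 2) ^ 2 * Real.Gamma (((q : ℝ) - 1) / 2) ^ 2 /
        (2 * Real.pi * Real.Gamma ((k : ℝ) + (q : ℝ) / 2) ^ 2) *
        ((2 * (k : ℝ) + 1) * (4 * (k : ℝ) + (q : ℝ) + 1) / (2 * (k : ℝ) + (q : ℝ))))) := by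
  exact gegenbauerCoeff_tan (by exact_mod_cast hq) k
end
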